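/- arXiv:2507.04653 — 7 statements merged into one kernel-verified Lean document; each statement's English description precedes it below -/
import Mathlib

section
/- For all positive integers n and k with 1 ≤ k ≤ n, the quantity w(n,k) = (1/k)·C(n-1,k-1)·C(n+k,k-1) equals C(n-1,k-1)·C(n+k,k) − C(n,k)·C(n+k,k-1), and in particular w(n,k) is an integer. -/
/-- For positive integers `n ≥ k ≥ 1`, `w(n,k) = (1/k)·C(n-1,k-1)·C(n+k,k-1)` equals
`C(n-1,k-1)·C(n+k,k) − C(n,k)·C(n+k,k-1)`; in particular `w(n,k)` is an integer. -/
theorem w_eq_and_int (n k : ℕ) (hk : 1 ≤ k) (hkn : k ≤ n) :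
    (((n - 1).choose (k - 1) * (n + k).choose (k - 1) : ℚ)) / k =
      (((n - 1).choose (k - 1) * (n + k).choose k : ℤ)
        - (n.choose k * (n + k).choose (k - 1) : ℤ) : ℤ) ∧
    ∃ z : ℤ, (((n - 1).choose (k - 1) * (n + k).choose (k - 1) : ℚ)) / k = z := by
  obtain ⟨j, rfl⟩ : ∃ j, k = j + 1 := ⟨k - 1, (Nat.succ_pred_eq_of_pos hk).symm⟩
  obtain ⟨m, rfl⟩ : ∃ m, n = m + 1 := ⟨n - 1, (Nat.succ_pred_eq_of_pos (hk.trans hkn)).symm⟩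
  simp only [Nat.add_sub_cancel]
  -- fact1 : (m+1) * C(m,j) = C(m+1,j+1) * (j+1)
  have fact1 := Nat.add_one_mul_choose_eq m j
  -- fact2 : C(m+1+(j+1), j+1) * (j+1) = C(m+1+(j+1), j) * (m+2)
  have fact2 := Nat.choose_succ_right_eq (m + 1 + (j + 1)) j
  have hsub : m + 1 + (j + 1) - j = m + 2 := by omega
  rw [hsub] at fact2
  have key : (m.choose j * (m + 1 + (j + 1)).choose j : ℤ) =
      (j + 1) * ((m.choose j * (m + 1 + (j + 1)).choose (j + 1) : ℤ)
        - ((m + 1).choose (j + 1) * (m + 1 + (j + 1)).choose j : ℤ)) := by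
    have f1 : ((m + 1 : ℕ) * m.choose j : ℤ) = ((m + 1).choose (j + 1) * (j + 1) : ℕ) := by
      exact_mod_cast congrArg (Nat.cast : ℕ → ℤ) fact1
    have f2 : ((m + 1 + (j + 1)).choose (j + 1) * (j + 1) : ℤ)
        = ((m + 1 + (j + 1)).choose j * (m + 2) : ℕ) := by
      exact_mod_cast congrArg (Nat.cast : ℕ → ℤ) fact2
    push_cast at f1 f2 ⊢
    nlinarith [f1, f2]
  have hk0 : ((j : ℚ) + 1) ≠ 0 := by positivity
  have keyQ : ((m.choose j : ℚ) * ((m + 1 + (j + 1)).choose j : ℚ)) =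
      ((j : ℚ) + 1) * ((m.choose j : ℚ) * ((m + 1 + (j + 1)).choose (j + 1) : ℚ)
        - ((m + 1).choose (j + 1) : ℚ) * ((m + 1 + (j + 1)).choose j : ℚ)) := by
    exact_mod_cast key
  constructor
  · rw [div_eq_iff (by push_cast; exact hk0)]
    push_cast
    linarith [keyQ]
  · refine ⟨(m.choose j * (m + 1 + (j + 1)).choose (j + 1) : ℤ)
        - ((m + 1).choose (j + 1) * (m + 1 + (j + 1)).choose j : ℤ), ?_⟩
    rw [div_eq_iff (by push_cast; exact hk0)]
    push_cast
    linarith [keyQ]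
end

section
/- For all positive integers m ≤ n, ∑_{k=m}^{n} (-1)^{n-k} · C(k-1,m-1) · w(n,k) = w(n,m). -/
/-- `w(n,k) = C(n-1,k-1)·C(n+k,k) − C(n,k)·C(n+k,k-1)`. -/
def w (n k : ℕ) : ℤ :=
  ((n - 1).choose (k - 1) * (n + k).choose k : ℤ) - (n.choose k * (n + k).choose (k - 1) : ℤ)

/-!
For `1 ≤ k ≤ n` one has `(n+1) w(n,k) = C(n-1,k-1) C(n+k,k)`, and
`C(k-1,m-1) C(n-1,k-1) = C(n-1,m-1) C(n-m,k-m)`. Hence `n+1` times the sum is `C(n-1,m-1)` times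
the `(n-m)`-th forward difference of `x ↦ C(x,n)` at `x = n+m`, which is `C(n+m,m)`; and
`C(n-1,m-1) C(n+m,m)` is again `(n+1) w(n,m)`.
-/

open Finset

lemma alternating_sum_choose_mul_choose_add (a r N : ℕ) (h : N ≤ r) :
    ∑ j ∈ range (N + 1), (-1 : ℤ) ^ (N - j) * N.choose j * (a + j).choose r
      = a.choose (r - N) := by
  have hdiff : (fwdDiff 1)^[N] (fun x : ℕ ↦ (x.choose r : ℤ)) a = a.choose (r - N) := by
    conv_lhs => rw [← Nat.add_sub_cancel' h, fwdDiff_iter_choose]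
  rw [← hdiff, fwdDiff_iter_eq_sum_shift]
  simp [mul_assoc]

lemma sum_Icc_alternating_choose_sub_mul_choose_add {m n : ℕ} (hmn : m ≤ n) :
    ∑ k ∈ Icc m n, (-1 : ℤ) ^ (n - k) * (n - m).choose (k - m) * (n + k).choose n
      = (n + m).choose m := by
  rw [← Ico_add_one_right_eq_Icc, sum_Ico_eq_sum_range, Nat.sub_add_comm hmn]
  convert alternating_sum_choose_mul_choose_add (n + m) n (n - m) (Nat.sub_le n m) using 2
    with j hj
  · rw [mem_range] at hj
    rw [show n - (m + j) = n - m - j by omega, Nat.add_sub_cancel_left, ← add_assoc]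
  · rw [Nat.sub_sub_self hmn]

lemma add_one_mul_w {n k : ℕ} (hk : 1 ≤ k) (hkn : k ≤ n) :
    (n + 1 : ℤ) * w n k = (n - 1).choose (k - 1) * (n + k).choose k := by
  have hsucc := Nat.choose_succ_right_eq (n + k) (k - 1)
  rw [Nat.sub_add_cancel hk, show n + k - (k - 1) = n + 1 by omega] at hsucc
  have hpascal := Nat.add_one_mul_choose_eq (n - 1) (k - 1)
  rw [Nat.sub_add_cancel hk, Nat.sub_add_cancel (hk.trans hkn)] at hpascal
  zify at hsucc hpascal
  simp only [w]
  linear_combination (n.choose k : ℤ) * hsucc + ((n + k).choose k : ℤ) * hpascal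

lemma add_one_mul_choose_mul_w {m n k : ℕ} (hm : 1 ≤ m) (hmk : m ≤ k) (hkn : k ≤ n) :
    (n + 1 : ℤ) * ((k - 1).choose (m - 1) * w n k)
      = (n - 1).choose (m - 1) * ((n - m).choose (k - m) * (n + k).choose n) := by
  have htri := Nat.choose_mul (n := n - 1) (Nat.sub_le_sub_right hmk 1)
  rw [Nat.sub_sub_sub_cancel_right hm, Nat.sub_sub_sub_cancel_right hm] at htri
  zify at htri
  rw [Nat.choose_symm_add]
  linear_combination
    (n + k).choose k * htri + (k - 1).choose (m - 1) * add_one_mul_w (hm.trans hmk) hkn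

/-- For positive integers `m ≤ n`,
`∑_{k=m}^{n} (-1)^{n-k} C(k-1,m-1) w(n,k) = w(n,m)`. -/
theorem sum_alternating_w (m n : ℕ) (hm : 1 ≤ m) (hmn : m ≤ n) :
    ∑ k ∈ Finset.Icc m n, (-1 : ℤ) ^ (n - k) * ((k - 1).choose (m - 1) : ℤ) * w n k
      = w n m := by
  apply mul_left_cancel₀ (by positivity : (n + 1 : ℤ) ≠ 0)
  calc (n + 1 : ℤ) * ∑ k ∈ Icc m n, (-1 : ℤ) ^ (n - k) * ((k - 1).choose (m - 1) : ℤ) *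
        w n k
      = ∑ k ∈ Icc m n, ((n - 1).choose (m - 1) : ℤ) *
          ((-1 : ℤ) ^ (n - k) * (n - m).choose (k - m) * (n + k).choose n) := by
        rw [mul_sum]
        refine sum_congr rfl fun k hk ↦ ?_
        obtain ⟨hmk, hkn⟩ := mem_Icc.mp hk
        linear_combination (-1 : ℤ) ^ (n - k) * add_one_mul_choose_mul_w hm hmk hkn
    _ = ((n - 1).choose (m - 1) : ℤ) * (n + m).choose m := by
        rw [← mul_sum, sum_Icc_alternating_choose_sub_mul_choose_add hmn]
    _ = (n + 1 : ℤ) * w n m := (add_one_mul_w hm hmn).symm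
end

section
/- For all integers n ≥ k ≥ 1, w(n,k) = ∑_{j=1}^{k} C(n-j, k-j) · N(n,j), where N(n,j) = (1/n)·C(n,j)·C(n,j-1) is the Narayana number. -/
/-- The Narayana number `N(n,j) = (1/n)·C(n,j)·C(n,j-1)`. -/
def narayana (n j : ℕ) : ℚ := ((n.choose j * n.choose (j - 1) : ℕ) : ℚ) / n

/-!
After pulling out `C(n,k)` via `C(n-j,k-j)·C(n,j) = C(n,k)·C(k,j)`, the Narayana sum becomes
`(1/n)·C(n,k)·∑_j C(k,j)·C(n,j-1)`, and Vandermonde's identity evaluates the remaining sum as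
`C(n+k,k-1)`. On the other side, `n·C(n-1,k-1) = k·C(n,k)` and `k·C(n+k,k) = (n+1)·C(n+k,k-1)`
turn `n·w(n,k)` into `(n+1)·C(n,k)·C(n+k,k-1) - n·C(n,k)·C(n+k,k-1) = C(n,k)·C(n+k,k-1)`.
-/

theorem Nat.sum_Icc_choose_pred_mul_choose (n : ℕ) {k : ℕ} (hk : 1 ≤ k) :
    ∑ j ∈ Finset.Icc 1 k, n.choose (j - 1) * k.choose j = (n + k).choose (k - 1) := by
  obtain ⟨m, rfl⟩ : ∃ m, k = m + 1 := ⟨k - 1, by omega⟩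
  rw [Nat.add_sub_cancel, Nat.add_choose_eq, Finset.Nat.sum_antidiagonal_eq_sum_range_succ
    (fun a b => n.choose a * (m + 1).choose b), ← Finset.Ico_add_one_right_eq_Icc,
    Finset.sum_Ico_eq_sum_range, Nat.add_sub_cancel]
  refine Finset.sum_congr rfl fun i hi => ?_
  rw [add_tsub_cancel_left, Nat.choose_symm_of_eq_add (by grind : m + 1 = 1 + i + (m - i))]

theorem sum_choose_sub_mul_choose_mul_choose (n : ℕ) {k : ℕ} (hk : 1 ≤ k) :
    ∑ j ∈ Finset.Icc 1 k, (n - j).choose (k - j) * (n.choose j * n.choose (j - 1)) =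
      n.choose k * (n + k).choose (k - 1) := by
  calc ∑ j ∈ Finset.Icc 1 k, (n - j).choose (k - j) * (n.choose j * n.choose (j - 1))
      = ∑ j ∈ Finset.Icc 1 k, n.choose k * (n.choose (j - 1) * k.choose j) := by
        refine Finset.sum_congr rfl fun j hj => ?_
        rw [mul_left_comm, ← mul_assoc, ← Nat.choose_mul (Finset.mem_Icc.mp hj).2]
        ring
    _ = n.choose k * (n + k).choose (k - 1) := by
        rw [← Finset.mul_sum, Nat.sum_Icc_choose_pred_mul_choose n hk]

theorem sum_choose_sub_mul_narayana (n : ℕ) {k : ℕ} (hk : 1 ≤ k) :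
    ∑ j ∈ Finset.Icc 1 k, ((n - j).choose (k - j) : ℚ) * narayana n j =
      (n.choose k * (n + k).choose (k - 1) : ℕ) / n := by
  simp only [narayana, mul_div_assoc', ← Finset.sum_div]
  exact_mod_cast congrArg (fun m : ℕ => (m : ℚ) / n) (sum_choose_sub_mul_choose_mul_choose n hk)

theorem natCast_mul_w_eq (n : ℕ) {k : ℕ} (hk : 1 ≤ k) :
    n * w n k = n.choose k * (n + k).choose (k - 1) := by
  obtain ⟨m, rfl⟩ : ∃ m, k = m + 1 := ⟨k - 1, by omega⟩
  have h₁ : (n * (n - 1).choose m : ℤ) = n.choose (m + 1) * (m + 1) := by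
    norm_cast
    cases n with
    | zero => simp
    | succ n => simpa using Nat.add_one_mul_choose_eq n m
  have h₂ : ((n + (m + 1)).choose (m + 1) * (m + 1) : ℤ) =
      (n + (m + 1)).choose m * (n + 1) := by
    norm_cast
    rw [Nat.choose_succ_right_eq]
    congr 2
    omega
  simp only [w, Nat.add_sub_cancel]
  linear_combination ((n + (m + 1)).choose (m + 1) : ℤ) * h₁ + (n.choose (m + 1) : ℤ) * h₂

/-- For `n ≥ k ≥ 1`, `w(n,k) = ∑_{j=1}^{k} C(n-j,k-j) · N(n,j)`. -/
theorem w_eq_sum_narayana (n k : ℕ) (hk : 1 ≤ k) (hkn : k ≤ n) :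
    (w n k : ℚ) = ∑ j ∈ Finset.Icc 1 k, ((n - j).choose (k - j) : ℚ) * narayana n j := by
  have hn : (n : ℚ) ≠ 0 := by exact_mod_cast (by omega : n ≠ 0)
  rw [sum_choose_sub_mul_narayana n hk, eq_div_iff hn, mul_comm]
  exact_mod_cast natCast_mul_w_eq n hk
end

section
/- For every positive integer n, the polynomial identity w_n(-1-x) = (-1)^{n-1} · w_n(x) holds in ℤ[x]. -/
open Polynomial

/-- `w_n(x) = ∑_{k=1}^{n} w(n,k) x^{k-1}` in `ℤ[x]`. -/
noncomputable def wPoly (n : ℕ) : Polynomial ℤ :=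
  ∑ k ∈ Finset.Icc 1 n, Polynomial.C (w n k) * X ^ (k - 1)

/-!
The polynomial `Q_n(x) = ∑ C(n,k) C(n+k,k) x^k` (the Legendre polynomial `P_n(1 + 2x)`) has
derivative `n(n+1) w_n(x)`, so it suffices to show `Q_n(-1-x) = (-1)^n Q_n(x)` and differentiate.
Comparing coefficients by Vandermonde's identity, `Q_n(x) = ∑ C(n,k)² x^k (1+x)^(n-k)`, and in
this form the substitution `x ↦ -1-x` reverses the order of summation, up to the sign `(-1)^n`.
-/

open Finset

theorem Nat.sum_range_choose_mul_choose (m n : ℕ) :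
    ∑ k ∈ range (m + 1), m.choose k * n.choose k = (n + m).choose m := by
  rw [Nat.add_choose_eq, Finset.Nat.sum_antidiagonal_eq_sum_range_succ
    (fun i j => n.choose i * m.choose j)]
  refine sum_congr rfl fun k hk => ?_
  rw [Nat.choose_symm (mem_range_succ_iff.mp hk), mul_comm]

section

variable (R : Type*) [CommRing R]

noncomputable def qPoly (n : ℕ) : R[X] :=
  ∑ k ∈ range (n + 1), C ((n.choose k * (n + k).choose k : ℕ) : R) * X ^ k

theorem coeff_qPoly (n m : ℕ) :
    (qPoly R n).coeff m = ((n.choose m * (n + m).choose m : ℕ) : R) := by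
  simp only [qPoly, finsetSum_coeff, coeff_C_mul_X_pow, sum_ite_eq, mem_range]
  split_ifs with hm
  · rfl
  · rw [Nat.choose_eq_zero_of_lt (by omega), zero_mul, Nat.cast_zero]

theorem qPoly_eq_sum_choose_sq (n : ℕ) :
    qPoly R n =
      ∑ k ∈ range (n + 1), C ((n.choose k ^ 2 : ℕ) : R) * (X ^ k * (1 + X) ^ (n - k)) := by
  ext m
  have hterm (k : ℕ) : (C ((n.choose k ^ 2 : ℕ) : R) * (X ^ k * (1 + X) ^ (n - k))).coeff m =
      ((n.choose m * (n.choose k * m.choose k) : ℕ) : R) := by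
    rw [coeff_C_mul, coeff_X_pow_mul', coeff_one_add_X_pow]
    split_ifs with hkm
    · rw [← Nat.cast_mul, sq, mul_assoc, ← Nat.choose_mul hkm, mul_left_comm]
    · rw [Nat.choose_eq_zero_of_lt (n := m) (by omega)]; simp
  rw [coeff_qPoly, finsetSum_coeff, sum_congr rfl fun k _ => hterm k, ← Nat.cast_sum, ← mul_sum,
    Nat.sum_range_choose_mul_choose, add_comm m n, Nat.choose_symm_add]

theorem comp_neg_one_sub_X_X_pow_mul_one_add_X_pow (i j : ℕ) :
    (X ^ i * (1 + X) ^ j : R[X]).comp (-1 - X) = (-1) ^ (i + j) * (X ^ j * (1 + X) ^ i) := by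
  have h1 : (-1 - X : R[X]) = -(1 + X) := by ring
  have h2 : (1 + -(1 + X) : R[X]) = -X := by ring
  rw [mul_comp, pow_comp, pow_comp, X_comp, add_comp, one_comp, X_comp, h1, h2, neg_pow, neg_pow]
  ring

theorem qPoly_comp_neg_one_sub_X (n : ℕ) : (qPoly R n).comp (-1 - X) = (-1) ^ n * qPoly R n := by
  rw [qPoly_eq_sum_choose_sq, Polynomial.sum_comp, mul_sum, ← sum_range_reflect]
  refine sum_congr rfl fun k hk => ?_
  have hkn := mem_range_succ_iff.mp hk
  rw [mul_comp, C_comp, comp_neg_one_sub_X_X_pow_mul_one_add_X_pow, Nat.add_sub_cancel,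
    Nat.sub_sub_self hkn, Nat.sub_add_cancel hkn, Nat.choose_symm hkn]
  ring

end

theorem mul_add_one_mul_w (n k : ℕ) :
    (n * (n + 1) : ℤ) * w n k = k * (n.choose k * (n + k).choose k : ℕ) := by
  rcases k with _ | m
  · simp [w]
  rcases n with _ | n
  · simp [w]
  have h₁ := Nat.add_one_mul_choose_eq n m
  have h₂ := Nat.choose_succ_right_eq (n + 1 + (m + 1)) m
  rw [show n + 1 + (m + 1) - m = n + 2 by omega] at h₂
  simp only [w, Nat.add_sub_cancel]
  zify at h₁ h₂
  push_cast at h₁ h₂ ⊢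
  linear_combination ((n : ℤ) + 2) * ((n + 1 + (m + 1)).choose (m + 1) : ℤ) * h₁ +
    ((n : ℤ) + 1) * ((n + 1).choose (m + 1) : ℤ) * h₂

theorem derivative_qPoly (n : ℕ) :
    derivative (qPoly ℤ n) = C (n * (n + 1) : ℤ) * wPoly n := by
  have hsub : Icc 1 n ⊆ range (n + 1) := fun k hk => by
    rw [mem_Icc] at hk; rw [mem_range]; omega
  rw [qPoly, derivative_sum, wPoly, mul_sum, ← sum_subset hsub]
  · refine sum_congr rfl fun k _ => ?_
    rw [derivative_C_mul_X_pow, ← mul_assoc, ← C_mul, mul_add_one_mul_w, mul_comm (k : ℤ)]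
  · intro k hk hk'
    obtain rfl : k = 0 := by rw [mem_range] at hk; rw [mem_Icc] at hk'; omega
    simp

/-- For every positive integer `n`, `w_n(-1-x) = (-1)^{n-1} w_n(x)` in `ℤ[x]`. -/
theorem wPoly_comp_neg (n : ℕ) (hn : 1 ≤ n) :
    (wPoly n).comp (-1 - X) = (-1 : Polynomial ℤ) ^ (n - 1) * wPoly n := by
  obtain ⟨m, rfl⟩ := Nat.exists_eq_add_of_le' hn
  have hsym := congrArg derivative (qPoly_comp_neg_one_sub_X ℤ (m + 1))
  have hconst : derivative (-1 : ℤ[X]) = 0 := by rw [derivative_neg, derivative_one, neg_zero]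
  rw [derivative_comp, derivative_mul, derivative_qPoly, mul_comp, C_comp, derivative_sub,
    derivative_X, derivative_pow, hconst, mul_zero, zero_mul, zero_add] at hsym
  have hN : (C ((m + 1 : ℕ) * ((m + 1 : ℕ) + 1) : ℤ) : ℤ[X]) ≠ 0 := by
    rw [Ne, C_eq_zero]; positivity
  apply mul_left_cancel₀ hN
  rw [Nat.add_sub_cancel]
  linear_combination -hsym
end

section
/- For every positive integer n, the polynomial identity (2x+1)·∑_{k=1}^{n} k(k+1)(2k+1)·(-1)^{n-k}·w_k(x)^2 = n(n+1)(n+2)·w_n(x)·w_{n+1}(x) holds in ℤ[x]. -/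
/-!
The closed form `n(n+1) w(n,k+1) = (k+1) C(n,k+1) C(n+k+1,k+1)` shows that `n(n+1) w_n` is the
derivative of the shifted Legendre polynomial `P_n(2x+1)`, so the `w_n` satisfy the three-term
recurrence `(n+3) w_{n+2} = (2n+3)(2x+1) w_{n+1} - n w_n`. Coefficientwise this is a binomial
identity, which becomes a polynomial identity in `m, i` once every binomial is written as a rational
multiple of `C(m,i)` or `C(m+i+2,i)`. Going from `n` to `n+1` flips the sign of the alternating sum
and adds its top term, and the recurrence turns the identity for `n` into the one for `n+1`.
-/

open Polynomial

namespace Nat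

variable {K : Type*} [Field K] [CharZero K]

theorem cast_choose_succ_succ (n k : ℕ) :
    ((n + 1).choose (k + 1) : K) = (n + 1) / (k + 1) * n.choose k := by
  rw [div_mul_eq_mul_div, eq_div_iff k.cast_add_one_ne_zero]
  exact_mod_cast (add_one_mul_choose_eq n k).symm

theorem cast_choose_succ_right (n k : ℕ) :
    (n.choose (k + 1) : K) = (n - k) / (k + 1) * n.choose k := by
  rw [div_mul_eq_mul_div, eq_div_iff k.cast_add_one_ne_zero]
  rcases le_or_gt k n with hk | hk
  · rw [← cast_sub hk, mul_comm _ (n.choose k : K)]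
    exact_mod_cast choose_succ_right_eq n k
  · simp [choose_eq_zero_of_lt hk, choose_eq_zero_of_lt (hk.trans (lt_succ_self k))]

end Nat

theorem mul_w_succ (n k : ℕ) :
    (n : ℤ) * (n + 1) * w n (k + 1) = (k + 1) * n.choose (k + 1) * (n + k + 1).choose (k + 1) := by
  rcases n with _ | m
  · simp
  have hm : ((m : ℤ) + 1) * m.choose k = (m + 1).choose (k + 1) * (k + 1) := by
    exact_mod_cast Nat.add_one_mul_choose_eq m k
  have hN : ((m + k + 2).choose (k + 1) : ℤ) * (k + 1) = (m + k + 2).choose k * (m + 2) := by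
    have := Nat.choose_succ_right_eq (m + k + 2) k
    rw [show m + k + 2 - k = m + 2 by omega] at this
    exact_mod_cast this
  simp only [w, Nat.add_sub_cancel, show m + 1 + (k + 1) = m + k + 2 by omega,
    show m + 1 + k + 1 = m + k + 2 by omega]
  push_cast
  linear_combination ((m : ℤ) + 2) * ((m + k + 2).choose (k + 1) : ℤ) * hm
    + ((m : ℤ) + 1) * ((m + 1).choose (k + 1) : ℤ) * hN

theorem w_one (n : ℕ) : w n 1 = 1 := by
  simp [w]

theorem w_eq_zero_of_lt {n k : ℕ} (hn : n ≠ 0) (h : n < k) : w n k = 0 := by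
  simp [w, Nat.choose_eq_zero_of_lt h, Nat.choose_eq_zero_of_lt (show n - 1 < k - 1 by omega)]

theorem coeff_wPoly {n : ℕ} (hn : n ≠ 0) (j : ℕ) : (wPoly n).coeff j = w n (j + 1) := by
  rw [wPoly, finsetSum_coeff, Finset.sum_eq_single (j + 1)]
  · simp
  · intro k hk hkj
    rw [coeff_C_mul_X_pow, if_neg (by grind)]
  · intro hj
    rw [coeff_C_mul_X_pow, w_eq_zero_of_lt hn (by grind), ite_self]

open Nat in
theorem choose_mul_choose_recurrence (m i : ℕ) :
    ((m : ℤ) + 1) * (i + 2) * (m + 2).choose (i + 2) * (m + i + 4).choose (i + 2)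
      = (2 * m + 3) * (2 * (i + 1) * (m + 1).choose (i + 1) * (m + i + 2).choose (i + 1)
          + (i + 2) * (m + 1).choose (i + 2) * (m + i + 3).choose (i + 2))
        - (m + 2) * (i + 2) * m.choose (i + 2) * (m + i + 2).choose (i + 2) := by
  qify
  rw [cast_choose_succ_succ (m + 1) (i + 1), cast_choose_succ_right (m + 1) (i + 1),
    cast_choose_succ_right m (i + 1), cast_choose_succ_right m i, cast_choose_succ_succ m i,
    cast_choose_succ_succ (m + i + 3) (i + 1), cast_choose_succ_succ (m + i + 2) i,
    cast_choose_succ_succ (m + i + 2) (i + 1), cast_choose_succ_right (m + i + 2) (i + 1),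
    cast_choose_succ_right (m + i + 2) i]
  push_cast
  field_simp
  ring

theorem w_recurrence (m i : ℕ) :
    ((m : ℤ) + 3) * w (m + 2) (i + 2)
      = (2 * m + 3) * (2 * w (m + 1) (i + 1) + w (m + 1) (i + 2)) - m * w m (i + 2) := by
  have hA := mul_w_succ (m + 2) (i + 1)
  have hB := mul_w_succ (m + 1) i
  have hC := mul_w_succ (m + 1) (i + 1)
  have hD := mul_w_succ m (i + 1)
  rw [show m + 2 + (i + 1) + 1 = m + i + 4 by omega] at hA
  rw [show m + 1 + i + 1 = m + i + 2 by omega] at hB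
  rw [show m + 1 + (i + 1) + 1 = m + i + 3 by omega] at hC
  rw [show m + (i + 1) + 1 = m + i + 2 by omega] at hD
  push_cast at hA hB hC hD
  apply mul_left_cancel₀ (show ((m : ℤ) + 1) * (m + 2) ≠ 0 by positivity)
  linear_combination (m + 1 : ℤ) * hA - (2 * m + 3 : ℤ) * (2 * hB + hC) + (m + 2 : ℤ) * hD
    + choose_mul_choose_recurrence m i

theorem wPoly_recurrence (m : ℕ) :
    ((m : ℤ) + 3) • wPoly (m + 2)
      = (2 * (m : ℤ) + 3) • ((2 * X + 1) * wPoly (m + 1)) - (m : ℤ) • wPoly m := by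
  have hm (j : ℕ) : (m : ℤ) * (wPoly m).coeff j = m * w m (j + 1) := by
    rcases eq_or_ne m 0 with rfl | hm
    · simp
    · rw [coeff_wPoly hm]
  ext (_ | i)
  · simp [hm, coeff_wPoly, w_one]
    ring
  · simp [add_mul, mul_assoc, hm, coeff_wPoly]
    linear_combination w_recurrence m i

theorem Finset.sum_Icc_mul_neg_one_pow_succ_sub_smul {R M : Type*} [Ring R] [AddCommGroup M]
    [Module R M] (a : ℕ → R) (f : ℕ → M) (n : ℕ) :
    ∑ k ∈ Finset.Icc 1 n, (a k * (-1) ^ (n + 1 - k)) • f k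
      = -∑ k ∈ Finset.Icc 1 n, (a k * (-1) ^ (n - k)) • f k := by
  rw [← Finset.sum_neg_distrib]
  refine Finset.sum_congr rfl fun k hk ↦ ?_
  rw [Nat.sub_add_comm (Finset.mem_Icc.mp hk).2, pow_succ, mul_neg_one, mul_neg, neg_smul]

theorem wPoly_sum_identity_general (n : ℕ) :
    (2 * X + 1) *
        ∑ k ∈ Finset.Icc 1 n,
          (((k : ℤ) * (k + 1) * (2 * k + 1)) * (-1 : ℤ) ^ (n - k)) • (wPoly k) ^ 2
      = ((n : ℤ) * (n + 1) * (n + 2)) • (wPoly n * wPoly (n + 1)) := by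
  induction n with
  | zero => simp
  | succ n ih =>
    rw [Finset.sum_Icc_succ_top (by omega), Finset.sum_Icc_mul_neg_one_pow_succ_sub_smul,
      Nat.sub_self, pow_zero, mul_one, show n + 1 + 1 = n + 2 from rfl]
    have hrec := wPoly_recurrence n
    simp only [zsmul_eq_mul] at ih hrec ⊢
    push_cast at ih hrec ⊢
    linear_combination -ih - ((n + 1 : ℤ[X]) * (n + 2) * wPoly (n + 1)) * hrec

/-- For every positive integer `n`,
`(2x+1)·∑_{k=1}^{n} k(k+1)(2k+1)(-1)^{n-k} w_k(x)² = n(n+1)(n+2)·w_n(x)·w_{n+1}(x)`. -/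
theorem wPoly_sum_identity (n : ℕ) (hn : 1 ≤ n) :
    (2 * X + 1) *
        ∑ k ∈ Finset.Icc 1 n,
          (((k : ℤ) * (k + 1) * (2 * k + 1)) * (-1 : ℤ) ^ (n - k)) • (wPoly k) ^ 2
      = ((n : ℤ) * (n + 1) * (n + 2)) • (wPoly n * wPoly (n + 1)) :=
  wPoly_sum_identity_general n
end

section
/- For all positive integers α, m, n, r and every divisor d > 1 of n, the cyclotomic polynomial Φ_d(q) divides ∑_{k=0}^{n-1} [k(k+1)]^r · [2k+1] · q^{(n-1-k)(αm+1)} · w_k^{(α)}(x;q)^m in ℤ[q][x]. -/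
open Polynomial LaurentPolynomial

/-- The Gaussian binomial coefficient as a polynomial in `q` over `ℤ`. -/
noncomputable def qbinom : ℕ → ℕ → Polynomial ℤ
  | _, 0 => 1
  | 0, _ + 1 => 0
  | n + 1, k + 1 => qbinom n k + Polynomial.X ^ (k + 1) * qbinom n (k + 1)

/-- The `q`-integer `[m] = 1 + q + ⋯ + q^{m-1}` in `ℤ[q]`. -/
noncomputable def qint (m : ℕ) : Polynomial ℤ := ∑ i ∈ Finset.range m, Polynomial.X ^ i

/-- The `q`-integer `[m]` as a Laurent polynomial in `q`. -/
noncomputable def qintL (m : ℕ) : LaurentPolynomial ℤ := (qint m).toLaurent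

/-- `qbinom(k-1,j-1)·qbinom(k+j,j) − qbinom(k,j)·qbinom(k+j,j-1)`. -/
noncomputable def qwCoeff (k j : ℕ) : Polynomial ℤ :=
  qbinom (k - 1) (j - 1) * qbinom (k + j) j - qbinom k j * qbinom (k + j) (j - 1)

/-- `w_k^{(α)}(x;q) = ∑_{j=1}^{k} q^{α(C(j+1,2)−(k+1)(j−1))} ·
(qbinom(k-1,j-1)·qbinom(k+j,j) − qbinom(k,j)·qbinom(k+j,j-1))^α · x^{j-1}`,
a polynomial in `x` with coefficients in `ℤ[q,q⁻¹]` (the exponent of `q` may be negative). -/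
noncomputable def qw (α k : ℕ) : Polynomial (LaurentPolynomial ℤ) :=
  ∑ j ∈ Finset.Icc 1 k,
    Polynomial.C (LaurentPolynomial.T ((α : ℤ) * (((j + 1).choose 2 : ℤ) - ((k : ℤ) + 1) * ((j : ℤ) - 1))) *
        ((qwCoeff k j).toLaurent) ^ α) *
      Polynomial.X ^ (j - 1)

/-!
Let `ζ` be a primitive `d`-th root of unity in a field of characteristic zero. As `Φ_d` is the
minimal polynomial of `ζ` over `ℤ`, it suffices that every `x`-coefficient of the sum vanishes
at `q = ζ`. Write `k = a d + s` with `s < d`. For `s = 0` and `s = d - 1` the factor `[k(k+1)]`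
vanishes at `ζ`. Otherwise the terms of `k` and `k' = a d + (d - 1 - s)` cancel:
`[k'(k'+1)] = [k(k+1)]`, `[2k'+1] = -ζ^(2k'+1) [2k+1]` and `w_{k'} = ζ^(-α(2s+1)) w_k`.
The last identity rests on `[j] c(k, j) = q^k qbinom(k-1, j-1) qbinom(k+j, j-1)` for the
bracket `c(k, j)` in `w_k`, on the `q`-Lucas theorem, and on the reflection
`qbinom(d-1-a, k) = (-1)^k ζ^(-ak - C(k+1,2)) qbinom(a+k, k)` at `q = ζ`.
-/

lemma qbinom_zero_right (n : ℕ) : qbinom n 0 = 1 := by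
  cases n <;> rfl

lemma qbinom_succ_succ (n k : ℕ) :
    qbinom (n + 1) (k + 1) = qbinom n k + X ^ (k + 1) * qbinom n (k + 1) :=
  rfl

lemma qbinom_eq_zero_of_lt {n k : ℕ} (h : n < k) : qbinom n k = 0 := by
  obtain ⟨k, rfl⟩ := Nat.exists_eq_add_one_of_ne_zero (by omega : k ≠ 0)
  induction n generalizing k with
  | zero => rfl
  | succ n ih =>
    obtain ⟨k, rfl⟩ := Nat.exists_eq_add_one_of_ne_zero (by omega : k ≠ 0)
    rw [qbinom_succ_succ, ih k (by omega), ih (k + 1) (by omega), mul_zero, add_zero]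

lemma qbinom_self (n : ℕ) : qbinom n n = 1 := by
  induction n with
  | zero => rfl
  | succ n ih => rw [qbinom_succ_succ, ih, qbinom_eq_zero_of_lt n.lt_add_one, mul_zero, add_zero]

lemma qint_add (a b : ℕ) : qint (a + b) = qint a + X ^ a * qint b := by
  simp only [qint, Finset.sum_range_add, pow_add, Finset.mul_sum]

lemma qint_one : qint 1 = 1 := by
  simp [qint]

lemma qint_mul_X_sub_one (m : ℕ) : qint m * (X - 1) = X ^ m - 1 :=
  geom_sum_mul X m

lemma qbinom_one (n : ℕ) : qbinom n 1 = qint n := by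
  induction n with
  | zero => rfl
  | succ n ih =>
    rw [qbinom_succ_succ, qbinom_zero_right, ih, add_comm n, qint_add, qint_one, pow_one]

/-- The second `q`-Pascal rule. -/
lemma qbinom_succ_succ' (n k : ℕ) :
    qbinom (n + 1) (k + 1) = X ^ (n - k) * qbinom n k + qbinom n (k + 1) := by
  induction n generalizing k with
  | zero => cases k <;> simp [qbinom_succ_succ, qbinom_zero_right, qbinom_eq_zero_of_lt]
  | succ n ih =>
    rcases k with _ | k
    · rw [qbinom_one, qbinom_one, qbinom_zero_right, qint_add (n + 1) 1]
      simp [qint, add_comm]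
    rcases le_or_gt n k with h | h
    · rw [Nat.sub_eq_zero_of_le (by omega), qbinom_succ_succ (n + 1),
        qbinom_eq_zero_of_lt (n := n + 1) (k := k + 2) (by omega)]
      ring
    · obtain ⟨a, rfl⟩ := Nat.exists_eq_add_of_lt h
      have h₁ := ih k
      have h₂ := ih (k + 1)
      rw [show k + a + 1 - k = a + 1 by omega] at h₁
      rw [show k + a + 1 - (k + 1) = a by omega] at h₂
      rw [show k + a + 1 + 1 - (k + 1) = a + 1 by omega]
      linear_combination qbinom_succ_succ (k + a + 1 + 1) (k + 1) + h₁ + X ^ (k + 2) * h₂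
        - X ^ (a + 1) * qbinom_succ_succ (k + a + 1) k - qbinom_succ_succ (k + a + 1) (k + 1)

lemma X_pow_sub_one_mul_qbinom (n k : ℕ) :
    (X ^ (k + 1) - 1) * qbinom n (k + 1) = (X ^ (n - k) - 1) * qbinom n k := by
  linear_combination qbinom_succ_succ' n k - qbinom_succ_succ n k

lemma qint_mul_qbinom (n k : ℕ) : qint (k + 1) * qbinom n (k + 1) = qint (n - k) * qbinom n k := by
  have hX : (X - 1 : ℤ[X]) ≠ 0 := by simpa using X_sub_C_ne_zero (1 : ℤ)
  apply mul_left_cancel₀ hX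
  linear_combination X_pow_sub_one_mul_qbinom n k + qbinom n (k + 1) * qint_mul_X_sub_one (k + 1)
    - qbinom n k * qint_mul_X_sub_one (n - k)

lemma qint_mul_qbinom_succ_succ (n k : ℕ) :
    qint (k + 1) * qbinom (n + 1) (k + 1) = qint (n + 1) * qbinom n k := by
  rcases lt_or_ge n k with h | h
  · rw [qbinom_eq_zero_of_lt h, qbinom_eq_zero_of_lt (by omega), mul_zero, mul_zero]
  obtain ⟨a, rfl⟩ := Nat.exists_eq_add_of_le h
  have h₁ := qint_mul_qbinom (k + a) k
  rw [Nat.add_sub_cancel_left] at h₁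
  rw [qbinom_succ_succ, show k + a + 1 = k + 1 + a by ring, qint_add (k + 1) a]
  linear_combination X ^ (k + 1) * h₁

noncomputable def qwNum (k j : ℕ) : ℤ[X] :=
  qbinom (k - 1) (j - 1) * qbinom (k + j) (j - 1)

lemma qint_mul_qwCoeff {k j : ℕ} (hk : 1 ≤ k) (hj : 1 ≤ j) :
    qint j * qwCoeff k j = X ^ k * qwNum k j := by
  obtain ⟨k, rfl⟩ := Nat.exists_eq_add_of_le' hk
  obtain ⟨j, rfl⟩ := Nat.exists_eq_add_of_le' hj
  have h₁ := qint_mul_qbinom (k + 1 + (j + 1)) j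
  have h₂ := qint_mul_qbinom_succ_succ k j
  rw [show k + 1 + (j + 1) - j = k + 1 + 1 by omega, qint_add (k + 1) 1, qint_one] at h₁
  simp only [qwCoeff, qwNum, Nat.add_sub_cancel]
  linear_combination qbinom k j * h₁ - qbinom (k + 1 + (j + 1)) j * h₂

lemma qwCoeff_eq_zero_of_lt {k j : ℕ} (hk : 1 ≤ k) (h : k < j) : qwCoeff k j = 0 := by
  rw [qwCoeff, qbinom_eq_zero_of_lt (by omega : k - 1 < j - 1), qbinom_eq_zero_of_lt h]
  ring

lemma qw_eq_sum_Icc {α k M : ℕ} (hα : α ≠ 0) (hk : 1 ≤ k) (hkM : k ≤ M) :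
    qw α k = ∑ j ∈ Finset.Icc 1 M,
      Polynomial.C (T ((α : ℤ) * (((j + 1).choose 2 : ℤ) - ((k : ℤ) + 1) * ((j : ℤ) - 1))) *
        (qwCoeff k j).toLaurent ^ α) * X ^ (j - 1) := by
  refine Finset.sum_subset (Finset.Icc_subset_Icc_right hkM) fun j hj hjk => ?_
  rw [Finset.mem_Icc] at hj hjk
  rw [qwCoeff_eq_zero_of_lt hk (by omega), map_zero, zero_pow hα, mul_zero, map_zero, zero_mul]

section RootOfUnity

variable {K : Type*} [Field K] {ζ : K} {d : ℕ}

lemma IsPrimitiveRoot.zpow_eq_zpow_of_dvd_sub (hζ : IsPrimitiveRoot ζ d) (hζ₀ : ζ ≠ 0) {a b : ℤ}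
    (h : (d : ℤ) ∣ a - b) : ζ ^ a = ζ ^ b := by
  rw [← sub_add_cancel a b, zpow_add₀ hζ₀, (hζ.zpow_eq_one_iff_dvd _).2 h, one_mul]

lemma aeval_qint_mul_sub_one (ζ : K) (m : ℕ) : aeval ζ (qint m) * (ζ - 1) = ζ ^ m - 1 := by
  simpa using congrArg (aeval ζ) (qint_mul_X_sub_one m)

lemma aeval_qint_eq_of_pow_eq (hζ : ζ ≠ 1) {M N : ℕ} (h : ζ ^ M = ζ ^ N) :
    aeval ζ (qint M) = aeval ζ (qint N) := by
  apply mul_right_cancel₀ (sub_ne_zero.2 hζ)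
  rw [aeval_qint_mul_sub_one, aeval_qint_mul_sub_one, h]

lemma aeval_qint_eq_neg_mul (hζ : ζ ≠ 1) {M N : ℕ} (h : ζ ^ (M + N) = 1) :
    aeval ζ (qint M) = -ζ ^ M * aeval ζ (qint N) := by
  apply mul_right_cancel₀ (sub_ne_zero.2 hζ)
  rw [mul_assoc, aeval_qint_mul_sub_one, aeval_qint_mul_sub_one]
  linear_combination h

lemma IsPrimitiveRoot.aeval_qint_eq_zero_iff (hζ : IsPrimitiveRoot ζ d) (hd : 1 < d) (m : ℕ) :
    aeval ζ (qint m) = 0 ↔ d ∣ m := by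
  rw [← hζ.pow_eq_one_iff_dvd, ← sub_eq_zero (a := ζ ^ m), ← aeval_qint_mul_sub_one,
    mul_eq_zero, or_iff_left (sub_ne_zero.2 (hζ.ne_one hd))]

lemma IsPrimitiveRoot.aeval_qint_ne_zero (hζ : IsPrimitiveRoot ζ d) {m : ℕ} (hm₀ : 0 < m)
    (hm : m < d) : aeval ζ (qint m) ≠ 0 := fun h =>
  absurd (Nat.le_of_dvd hm₀ ((hζ.aeval_qint_eq_zero_iff (by omega) m).1 h)) (by omega)

lemma IsPrimitiveRoot.aeval_qbinom_order_eq_zero (hζ : IsPrimitiveRoot ζ d) {k : ℕ} (hk₀ : 0 < k)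
    (hk : k < d) : aeval ζ (qbinom d k) = 0 := by
  obtain ⟨n, rfl⟩ := Nat.exists_eq_add_of_le' (by omega : 1 ≤ d)
  obtain ⟨k, rfl⟩ := Nat.exists_eq_add_of_le' hk₀
  have h := congrArg (aeval ζ) (qint_mul_qbinom_succ_succ n k)
  rw [map_mul, map_mul, (hζ.aeval_qint_eq_zero_iff (by omega) _).2 dvd_rfl, zero_mul] at h
  exact (mul_eq_zero.1 h).resolve_left (hζ.aeval_qint_ne_zero k.succ_pos hk)

lemma IsPrimitiveRoot.aeval_qbinom_add (hζ : IsPrimitiveRoot ζ d) (hd : 0 < d) (n k : ℕ) :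
    aeval ζ (qbinom (n + d) k) =
      aeval ζ (qbinom n k) + if d ≤ k then aeval ζ (qbinom n (k - d)) else 0 := by
  induction n generalizing k with
  | zero =>
    rcases lt_trichotomy k d with h | rfl | h
    · rcases Nat.eq_zero_or_pos k with rfl | hk
      · simp [qbinom_zero_right, hd.ne']
      · rw [zero_add, hζ.aeval_qbinom_order_eq_zero hk h, qbinom_eq_zero_of_lt hk,
          if_neg (by omega)]
        simp
    · simp [qbinom_self, qbinom_eq_zero_of_lt hd]
    · rw [zero_add, qbinom_eq_zero_of_lt h, qbinom_eq_zero_of_lt (by omega),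
        qbinom_eq_zero_of_lt (by omega)]
      simp
  | succ n ih =>
    rcases k with _ | k
    · simp [qbinom_zero_right, hd.ne']
    rw [show n + 1 + d = n + d + 1 by ring, qbinom_succ_succ, map_add, map_mul, ih, ih,
      qbinom_succ_succ, map_add, map_mul]
    rcases lt_trichotomy (k + 1) d with h | h | h
    · simp only [if_neg (show ¬d ≤ k by omega), if_neg (show ¬d ≤ k + 1 by omega)]
      simp
    · subst h
      simp only [if_neg (show ¬k + 1 ≤ k by omega), if_pos le_rfl, Nat.sub_self, qbinom_zero_right,
        map_one, map_pow, aeval_X, hζ.pow_eq_one]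
      ring
    · simp only [if_pos (show d ≤ k by omega), if_pos (show d ≤ k + 1 by omega),
        show k + 1 - d = k - d + 1 by omega, qbinom_succ_succ, map_add, map_mul, map_pow, aeval_X]
      have : ζ ^ (k + 1) = ζ ^ (k - d + 1) := by
        rw [show k + 1 = k - d + 1 + d by omega, pow_add, hζ.pow_eq_one, mul_one]
      rw [this]
      ring

/-- The `q`-Lucas theorem at a primitive `d`-th root of unity. -/
lemma IsPrimitiveRoot.aeval_qbinom_mul_add (hζ : IsPrimitiveRoot ζ d) {s t : ℕ} (hs : s < d)
    (ht : t < d) (a b : ℕ) :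
    aeval ζ (qbinom (a * d + s) (b * d + t)) = a.choose b * aeval ζ (qbinom s t) := by
  induction a generalizing b with
  | zero =>
    rcases b with _ | b
    · simp
    · rw [qbinom_eq_zero_of_lt (by nlinarith), Nat.choose_zero_succ]
      simp
  | succ a ih =>
    rw [show (a + 1) * d + s = a * d + s + d by ring, hζ.aeval_qbinom_add (by omega)]
    rcases b with _ | b
    · rw [if_neg (by omega), ih 0]
      simp
    · rw [if_pos (by nlinarith), show (b + 1) * d + t - d = b * d + t by
        rw [add_mul, one_mul]; omega, ih, ih, Nat.choose_succ_succ']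
      push_cast
      ring

lemma IsPrimitiveRoot.aeval_qbinom_mul_add_eq_zero (hζ : IsPrimitiveRoot ζ d) {s t : ℕ}
    (hst : s < t) (ht : t < d) (a b : ℕ) : aeval ζ (qbinom (a * d + s) (b * d + t)) = 0 := by
  rw [hζ.aeval_qbinom_mul_add (by omega) ht, qbinom_eq_zero_of_lt hst, map_zero, mul_zero]

/-- Reflection of the upper index: at `q = ζ`, `d - 1 - a` behaves like `-1 - a`. -/
lemma IsPrimitiveRoot.pow_mul_aeval_qbinom_reflect (hζ : IsPrimitiveRoot ζ d) {a k : ℕ}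
    (h : a + k < d) :
    ζ ^ (a * k + (k + 1).choose 2) * aeval ζ (qbinom (d - 1 - a) k) =
      (-1) ^ k * aeval ζ (qbinom (a + k) k) := by
  induction k generalizing a with
  | zero => simp [qbinom_zero_right]
  | succ k ih =>
    have h₁ := congrArg (aeval ζ) (qint_mul_qbinom_succ_succ (d - 2 - a) k)
    have h₂ := congrArg (aeval ζ) (qint_mul_qbinom (a + k + 1) k)
    have h₃ := ih (a := a + 1) (by omega)
    have h₄ := aeval_qint_eq_neg_mul (hζ.ne_one (by omega)) (M := a + 1) (N := d - 1 - a)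
      (by rw [show a + 1 + (d - 1 - a) = d by omega, hζ.pow_eq_one])
    rw [show d - 2 - a + 1 = d - 1 - a by omega, map_mul, map_mul] at h₁
    rw [show a + k + 1 - k = a + 1 by omega, map_mul, map_mul] at h₂
    rw [show d - 1 - (a + 1) = d - 2 - a by omega, show a + 1 + k = a + k + 1 by omega] at h₃
    apply mul_left_cancel₀ (hζ.aeval_qint_ne_zero k.succ_pos (by omega))
    rw [show a * (k + 1) + (k + 1 + 1).choose 2 = (a + 1) + ((a + 1) * k + (k + 1).choose 2) by
      rw [Nat.choose_succ_succ', Nat.choose_one_right]; ring, pow_add,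
      show a + (k + 1) = a + k + 1 by omega]
    linear_combination ζ ^ (a + 1) * ζ ^ ((a + 1) * k + (k + 1).choose 2) * h₁
      + ζ ^ (a + 1) * aeval ζ (qint (d - 1 - a)) * h₃
      + (-1) ^ k * aeval ζ (qbinom (a + k + 1) k) * h₄ + (-1) ^ k * h₂

lemma IsPrimitiveRoot.aeval_qwNum_mul_add (hζ : IsPrimitiveRoot ζ d) {s t : ℕ} (hs : 1 ≤ s)
    (hsd : s + 2 ≤ d) (ht : 1 ≤ t) (htd : t < d) (a b : ℕ) :
    aeval ζ (qwNum (a * d + s) (b * d + t)) =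
      a.choose b * (a + b).choose b * aeval ζ (qwNum s t) := by
  simp only [qwNum, map_mul]
  rw [show a * d + s - 1 = a * d + (s - 1) by omega, show b * d + t - 1 = b * d + (t - 1) by omega,
    hζ.aeval_qbinom_mul_add (by omega) (by omega)]
  rcases lt_or_ge (s + t) d with h | h
  · rw [show a * d + s + (b * d + t) = (a + b) * d + (s + t) by ring,
      hζ.aeval_qbinom_mul_add h (by omega)]
    ring
  · have hst : s + t - d < t - 1 := by omega
    rw [show a * d + s + (b * d + t) = (a + b + 1) * d + (s + t - d) by
        rw [add_mul, add_mul, one_mul]; omega,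
      hζ.aeval_qbinom_mul_add_eq_zero hst (by omega), show s + t = 1 * d + (s + t - d) by omega,
      show t - 1 = 0 * d + (t - 1) by ring, hζ.aeval_qbinom_mul_add_eq_zero hst (by omega)]
    ring

lemma IsPrimitiveRoot.pow_mul_aeval_qwNum_reflect (hζ : IsPrimitiveRoot ζ d) {s t : ℕ}
    (hs : 1 ≤ s) (hsd : s + 2 ≤ d) (ht : 1 ≤ t) (htd : t < d) :
    ζ ^ ((2 * s + 1) * t + (d - 1 - s)) * aeval ζ (qwNum (d - 1 - s) t) =
      ζ ^ s * aeval ζ (qwNum s t) := by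
  simp only [qwNum, map_mul]
  rcases lt_or_ge s t with hst | hts
  · rw [qbinom_eq_zero_of_lt (by omega : s - 1 < t - 1),
      show d - 1 - s + t = 1 * d + (t - 1 - s) by omega, show t - 1 = 0 * d + (t - 1) by ring,
      hζ.aeval_qbinom_mul_add_eq_zero (by omega) (by omega)]
    simp
  rcases le_or_gt d (s + t) with hdst | hdst
  · rw [qbinom_eq_zero_of_lt (by omega : d - 1 - s - 1 < t - 1),
      show s + t = 1 * d + (s + t - d) by omega, show t - 1 = 0 * d + (t - 1) by ring,
      hζ.aeval_qbinom_mul_add_eq_zero (by omega) (by omega)]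
    simp
  obtain ⟨p, rfl⟩ := Nat.exists_eq_add_of_le' ht
  have h₁ := hζ.pow_mul_aeval_qbinom_reflect (a := s + 1) (k := p) (by omega)
  have h₂ := hζ.pow_mul_aeval_qbinom_reflect (a := s - 1 - p) (k := p) (by omega)
  rw [show d - 1 - (s + 1) = d - 1 - s - 1 by omega, show s + 1 + p = s + (p + 1) by omega] at h₁
  rw [show d - 1 - (s - 1 - p) = d - 1 - s + (p + 1) by omega,
    show s - 1 - p + p = s - 1 by omega] at h₂
  have hchoose := Nat.add_one_mul_choose_eq p 1
  rw [Nat.choose_one_right] at hchoose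
  have hexp : (2 * s + 1) * (p + 1) + (d - 1 - s) =
      s + ((s + 1) * p + (p + 1).choose 2) + ((s - 1 - p) * p + (p + 1).choose 2) + d := by
    obtain ⟨c, rfl⟩ := Nat.exists_eq_add_of_le hts
    obtain ⟨e, rfl⟩ := Nat.exists_eq_add_of_lt hdst
    rw [show p + 1 + c - 1 - p = c by omega, show p + 1 + c + (p + 1) + e + 1 - 1 - (p + 1 + c) =
      p + 1 + e by omega]
    linarith
  have hsign : ((-1 : K) ^ p) * (-1) ^ p = 1 := by
    rw [← pow_add, ← two_mul, pow_mul, neg_one_sq, one_pow]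
  rw [Nat.add_sub_cancel, hexp, pow_add, pow_add, pow_add, hζ.pow_eq_one]
  linear_combination ζ ^ s * ζ ^ ((s + 1) * p + (p + 1).choose 2) *
      aeval ζ (qbinom (d - 1 - s - 1) p) * h₂ +
    ζ ^ s * (-1) ^ p * aeval ζ (qbinom (s - 1) p) * h₁ +
    ζ ^ s * aeval ζ (qbinom (s - 1) p) * aeval ζ (qbinom (s + (p + 1)) p) * hsign

lemma IsPrimitiveRoot.aeval_qwCoeff_mul_eq_zero (hζ : IsPrimitiveRoot ζ d) {s b : ℕ} (hs : 1 ≤ s)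
    (hsd : s + 2 ≤ d) (hb : 1 ≤ b) (a : ℕ) : aeval ζ (qwCoeff (a * d + s) (b * d)) = 0 := by
  obtain ⟨b, rfl⟩ := Nat.exists_eq_add_of_le' hb
  have hj : (b + 1) * d - 1 = b * d + (d - 1) := by rw [add_mul, one_mul]; omega
  rw [qwCoeff, map_sub, map_mul, map_mul, show a * d + s - 1 = a * d + (s - 1) by omega, hj,
    show a * d + s + (b + 1) * d = (a + b + 1) * d + s by ring,
    hζ.aeval_qbinom_mul_add_eq_zero (by omega) (by omega),
    hζ.aeval_qbinom_mul_add_eq_zero (by omega) (by omega)]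
  ring

lemma IsPrimitiveRoot.pow_mul_aeval_qwCoeff_reflect (hζ : IsPrimitiveRoot ζ d) {s j : ℕ}
    (hs : 1 ≤ s) (hsd : s + 2 ≤ d) (hj : 1 ≤ j) (a : ℕ) :
    ζ ^ ((2 * s + 1) * j) * aeval ζ (qwCoeff (a * d + (d - 1 - s)) j) =
      aeval ζ (qwCoeff (a * d + s) j) := by
  obtain ⟨b, t, rfl, htd⟩ : ∃ b t, j = b * d + t ∧ t < d :=
    ⟨j / d, j % d, (Nat.div_add_mod' j d).symm, Nat.mod_lt _ (by omega)⟩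
  rcases Nat.eq_zero_or_pos t with rfl | ht
  · rw [add_zero] at hj ⊢
    have hb : 1 ≤ b := Nat.pos_of_ne_zero (by rintro rfl; simp at hj)
    rw [hζ.aeval_qwCoeff_mul_eq_zero hs hsd hb,
      hζ.aeval_qwCoeff_mul_eq_zero (by omega) (by omega) hb, mul_zero]
  have hqint : aeval ζ (qint (b * d + t)) ≠ 0 := by
    rw [Ne, hζ.aeval_qint_eq_zero_iff (by omega), Nat.dvd_add_right (dvd_mul_left d b)]
    exact fun h => absurd (Nat.le_of_dvd ht h) (by omega)
  have key (k : ℕ) (hk : 1 ≤ k) := congrArg (aeval ζ) (qint_mul_qwCoeff hk (j := b * d + t) hj)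
  simp only [map_mul, map_pow, aeval_X] at key
  apply mul_left_cancel₀ hqint
  rw [mul_left_comm, key _ (by omega), key _ (by omega),
    hζ.aeval_qwNum_mul_add hs hsd ht htd, hζ.aeval_qwNum_mul_add (by omega) (by omega) ht htd,
    show (2 * s + 1) * (b * d + t) = (2 * s + 1) * t + d * ((2 * s + 1) * b) by ring,
    show a * d + (d - 1 - s) = d - 1 - s + d * a by ring, show a * d + s = s + d * a by ring]
  simp only [pow_add ζ _ (d * _), pow_mul, hζ.pow_eq_one, one_pow, mul_one]
  linear_combination
    (a.choose b * (a + b).choose b : K) * hζ.pow_mul_aeval_qwNum_reflect hs hsd ht htd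
end RootOfUnity

lemma sum_range_mul_eq_zero_of_reflect {M : Type*} [AddCommGroup M] [IsAddTorsionFree M]
    {f : ℕ → M} {d : ℕ} (hf : ∀ a i, i < d → f (a * d + (d - 1 - i)) = -f (a * d + i)) (e : ℕ) :
    ∑ k ∈ Finset.range (e * d), f k = 0 := by
  induction e with
  | zero => simp
  | succ e ih =>
    rw [add_mul, one_mul, Finset.sum_range_add, ih, zero_add, ← self_eq_neg]
    calc ∑ i ∈ Finset.range d, f (e * d + i)
        = ∑ i ∈ Finset.range d, f (e * d + (d - 1 - i)) :=
          (Finset.sum_range_reflect (fun i => f (e * d + i)) d).symm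
      _ = -∑ i ∈ Finset.range d, f (e * d + i) := by
          rw [← Finset.sum_neg_distrib]
          exact Finset.sum_congr rfl fun i hi => hf e i (Finset.mem_range.1 hi)

noncomputable def summand (α m n r k : ℕ) : Polynomial (LaurentPolynomial ℤ) :=
  Polynomial.C ((qintL (k * (k + 1))) ^ r * qintL (2 * k + 1) *
      LaurentPolynomial.T (((n : ℤ) - 1 - k) * (α * m + 1))) * (qw α k) ^ m

section Evaluation

variable {K : Type*} [Field K] {d : ℕ} (u : Kˣ)

lemma eval₂_toLaurent_eq_aeval (p : ℤ[X]) :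
    LaurentPolynomial.eval₂ (Int.castRingHom K) u p.toLaurent = aeval (u : K) p := by
  rw [eval₂_toLaurent, aeval_def, algebraMap_int_eq]

lemma map_summand (α m n r k : ℕ) :
    (summand α m n r k).map (LaurentPolynomial.eval₂ (Int.castRingHom K) u) =
      Polynomial.C (aeval (u : K) (qint (k * (k + 1))) ^ r * aeval (u : K) (qint (2 * k + 1)) *
        (u : K) ^ (((n : ℤ) - 1 - k) * (α * m + 1))) *
        (qw α k).map (LaurentPolynomial.eval₂ (Int.castRingHom K) u) ^ m := by
  simp only [summand, Polynomial.map_mul, Polynomial.map_pow, Polynomial.map_C, RingHom.map_mul,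
    RingHom.map_pow, qintL, eval₂_toLaurent_eq_aeval, eval₂_T, Units.val_zpow_eq_zpow_val]

variable {u}

lemma cyclotomic_toLaurent_dvd_of_eval₂_eq_zero [CharZero K] (hu : IsPrimitiveRoot (u : K) d)
    (hd : 0 < d) {L : LaurentPolynomial ℤ}
    (hL : LaurentPolynomial.eval₂ (Int.castRingHom K) u L = 0) :
    (cyclotomic d ℤ).toLaurent ∣ L := by
  obtain ⟨N, p, hp⟩ := L.exists_T_pow
  have hp₀ : aeval (u : K) p = 0 := by
    rw [← eval₂_toLaurent_eq_aeval, hp, map_mul, hL, zero_mul]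
  have hdvd : cyclotomic d ℤ ∣ p := by
    rw [cyclotomic_eq_minpoly hu hd]
    exact minpoly.isIntegrallyClosed_dvd (hu.isIntegral hd) hp₀
  exact (isUnit_T (N : ℤ)).dvd_mul_right.mp (hp ▸ map_dvd toLaurent hdvd)

lemma map_summand_eq_zero (hu : IsPrimitiveRoot (u : K) d) (hd : 1 < d) {r : ℕ} (hr : r ≠ 0)
    {k : ℕ} (hk : d ∣ k * (k + 1)) (α m n : ℕ) :
    (summand α m n r k).map (LaurentPolynomial.eval₂ (Int.castRingHom K) u) = 0 := by
  rw [map_summand, (hu.aeval_qint_eq_zero_iff hd _).2 hk, zero_pow hr]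
  simp

lemma map_qw_reflect (hu : IsPrimitiveRoot (u : K) d) {α s : ℕ} (hα : α ≠ 0) (hs : 1 ≤ s)
    (hsd : s + 2 ≤ d) (a : ℕ) :
    (qw α (a * d + (d - 1 - s))).map (LaurentPolynomial.eval₂ (Int.castRingHom K) u) =
      Polynomial.C ((u : K) ^ (-(α * (2 * s + 1) : ℤ))) *
        (qw α (a * d + s)).map (LaurentPolynomial.eval₂ (Int.castRingHom K) u) := by
  rw [qw_eq_sum_Icc hα (by omega) (le_add_right le_rfl : _ ≤ a * d + (d - 1 - s) + (a * d + s)),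
    qw_eq_sum_Icc hα (by omega) (le_add_left le_rfl : _ ≤ a * d + (d - 1 - s) + (a * d + s)),
    Polynomial.map_sum, Polynomial.map_sum, Finset.mul_sum]
  refine Finset.sum_congr rfl fun j hj => ?_
  have hj : 1 ≤ j := (Finset.mem_Icc.1 hj).1
  simp only [Polynomial.map_mul, Polynomial.map_C, Polynomial.map_pow, Polynomial.map_X,
    RingHom.map_mul, RingHom.map_pow, eval₂_T, Units.val_zpow_eq_zpow_val, eval₂_toLaurent_eq_aeval]
  rw [← mul_assoc]
  simp only [← Polynomial.C_pow, ← Polynomial.C_mul]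
  congr 2
  rw [← hu.pow_mul_aeval_qwCoeff_reflect hs hsd hj a, mul_pow, ← pow_mul, ← mul_assoc, ← mul_assoc]
  congr 1
  rw [← zpow_natCast, ← zpow_add₀ u.ne_zero, ← zpow_add₀ u.ne_zero]
  apply hu.zpow_eq_zpow_of_dvd_sub u.ne_zero
  have hk : ((a * d + (d - 1 - s) : ℕ) : ℤ) = a * d + d - 1 - s := by push_cast; omega
  exact ⟨-(α * (j - 1)), by push_cast [hk]; ring⟩

lemma map_summand_reflect (hu : IsPrimitiveRoot (u : K) d) {α s : ℕ} (hα : α ≠ 0) (hs : 1 ≤ s)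
    (hsd : s + 2 ≤ d) (m n r a : ℕ) :
    (summand α m n r (a * d + (d - 1 - s))).map (LaurentPolynomial.eval₂ (Int.castRingHom K) u) =
      -(summand α m n r (a * d + s)).map (LaurentPolynomial.eval₂ (Int.castRingHom K) u) := by
  have hζ₁ : (u : K) ≠ 1 := hu.ne_one (by omega)
  have hs' : ((d - 1 - s : ℕ) : ℤ) = d - 1 - s := by omega
  have h₁ : aeval (u : K) (qint ((a * d + (d - 1 - s)) * (a * d + (d - 1 - s) + 1))) =
      aeval (u : K) (qint ((a * d + s) * (a * d + s + 1))) := by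
    apply aeval_qint_eq_of_pow_eq hζ₁
    simpa only [zpow_natCast] using hu.zpow_eq_zpow_of_dvd_sub u.ne_zero
      (a := ((a * d + (d - 1 - s)) * (a * d + (d - 1 - s) + 1) : ℕ))
      (b := ((a * d + s) * (a * d + s + 1) : ℕ))
      ⟨((d : ℤ) - 1 - 2 * s) * (2 * a + 1), by push_cast [hs']; ring⟩
  have h₂ : aeval (u : K) (qint (2 * (a * d + (d - 1 - s)) + 1)) =
      -(u : K) ^ (2 * (a * d + (d - 1 - s)) + 1) * aeval (u : K) (qint (2 * (a * d + s) + 1)) := by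
    apply aeval_qint_eq_neg_mul hζ₁
    rw [show 2 * (a * d + (d - 1 - s)) + 1 + (2 * (a * d + s) + 1) = d * (4 * a + 2) by
      zify; push_cast [hs']; ring, pow_mul, hu.pow_eq_one, one_pow]
  have h₃ : (u : K) ^ (2 * (a * d + (d - 1 - s)) + 1) *
      (u : K) ^ (((n : ℤ) - 1 - ((a * d + (d - 1 - s) : ℕ) : ℤ)) * (α * m + 1)) *
      ((u : K) ^ (-(α * (2 * s + 1) : ℤ))) ^ m =
      (u : K) ^ (((n : ℤ) - 1 - ((a * d + s : ℕ) : ℤ)) * (α * m + 1)) := by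
    rw [← zpow_natCast _ (2 * _ + 1), ← zpow_natCast _ m, ← zpow_mul, ← zpow_add₀ u.ne_zero,
      ← zpow_add₀ u.ne_zero]
    exact hu.zpow_eq_zpow_of_dvd_sub u.ne_zero ⟨2 * a + 1 - α * m, by push_cast [hs']; ring⟩
  rw [map_summand, map_summand, map_qw_reflect hu hα hs hsd, mul_pow, ← Polynomial.C_pow,
    ← mul_assoc, ← Polynomial.C_mul, ← neg_mul (Polynomial.C _ : K[X]), ← Polynomial.C_neg, h₁, h₂]
  congr 2
  linear_combination -(aeval (u : K) (qint ((a * d + s) * (a * d + s + 1))) ^ r *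
    aeval (u : K) (qint (2 * (a * d + s) + 1))) * h₃

lemma sum_map_summand_eq_zero [CharZero K] (hu : IsPrimitiveRoot (u : K) d) (hd : 1 < d) {α r n : ℕ}
    (hα : α ≠ 0) (hr : r ≠ 0) (hdn : d ∣ n) (m : ℕ) :
    ∑ k ∈ Finset.range n,
      (summand α m n r k).map (LaurentPolynomial.eval₂ (Int.castRingHom K) u) = 0 := by
  obtain ⟨e, rfl⟩ := hdn
  rw [mul_comm]
  refine sum_range_mul_eq_zero_of_reflect (fun a i hi => ?_) e
  have hfirst := map_summand_eq_zero hu hd hr (k := a * d) ((dvd_mul_left d a).mul_right _) α m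
    (e * d)
  have hlast := map_summand_eq_zero hu hd hr (k := a * d + (d - 1))
    ⟨(a * d + (d - 1)) * (a + 1), by rw [show a * d + (d - 1) + 1 = (a + 1) * d by
      rw [add_mul, one_mul]; omega]; ring⟩ α m (e * d)
  rcases Nat.eq_zero_or_pos i with rfl | hi₀
  · rw [Nat.sub_zero, add_zero, hfirst, hlast, neg_zero]
  rcases eq_or_lt_of_le (show i ≤ d - 1 by omega) with rfl | hi₁
  · rw [Nat.sub_self, add_zero, hfirst, hlast, neg_zero]
  exact map_summand_reflect hu hα hi₀ (by omega) m (e * d) r a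

end Evaluation

theorem cyclotomic_dvd_sum_general (α m n r d : ℕ) (hα : 1 ≤ α) (hr : 1 ≤ r)
    (hd : 1 < d) (hdn : d ∣ n) :
    (Polynomial.C ((Polynomial.cyclotomic d ℤ).toLaurent) : Polynomial (LaurentPolynomial ℤ)) ∣
      ∑ k ∈ Finset.range n,
        Polynomial.C ((qintL (k * (k + 1))) ^ r * qintL (2 * k + 1) *
            LaurentPolynomial.T (((n : ℤ) - 1 - k) * (α * m + 1))) *
          (qw α k) ^ m := by
  have hζ := Complex.isPrimitiveRoot_exp d (by omega)
  obtain ⟨u, hu⟩ : ∃ u : ℂˣ, IsPrimitiveRoot (u : ℂ) d := ⟨Units.mk0 _ (hζ.ne_zero (by omega)), hζ⟩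
  change _ ∣ ∑ k ∈ Finset.range n, summand α m n r k
  refine (C_dvd_iff_dvd_coeff _ _).2 fun i => cyclotomic_toLaurent_dvd_of_eval₂_eq_zero hu
    (by omega) ?_
  rw [← coeff_map, Polynomial.map_sum, sum_map_summand_eq_zero hu hd (by omega) (by omega) hdn,
    coeff_zero]

/-- For all positive integers `α, m, n, r` and every divisor `d > 1` of `n`, the cyclotomic
polynomial `Φ_d(q)` divides
`∑_{k=0}^{n-1} [k(k+1)]^r [2k+1] q^{(n-1-k)(αm+1)} w_k^{(α)}(x;q)^m`. -/
theorem cyclotomic_dvd_sum (α m n r d : ℕ) (hα : 1 ≤ α) (hm : 1 ≤ m) (hn : 1 ≤ n) (hr : 1 ≤ r)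
    (hd : 1 < d) (hdn : d ∣ n) :
    (Polynomial.C ((Polynomial.cyclotomic d ℤ).toLaurent) : Polynomial (LaurentPolynomial ℤ)) ∣
      ∑ k ∈ Finset.range n,
        Polynomial.C ((qintL (k * (k + 1))) ^ r * qintL (2 * k + 1) *
            LaurentPolynomial.T (((n : ℤ) - 1 - k) * (α * m + 1))) *
          (qw α k) ^ m :=
  cyclotomic_dvd_sum_general α m n r d hα hr hd hdn
end

section
/- (q-Lucas theorem) Let d > 1 be a positive integer and let a, b, s, t be integers with 0 ≤ b, t ≤ d−1. Then qbinom(ad+b, sd+t) ≡ C(a,s) · qbinom(b,t) (mod Φ_d(q)) in ℤ[q]. -/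
open scoped Polynomial

/-- The `q`-integer `[m] = (1 − q^m)/(1 − q)` for an arbitrary integer `m`, in `ℚ(q)`. -/
noncomputable def qi (m : ℤ) : RatFunc ℚ := (1 - RatFunc.X ^ m) / (1 - RatFunc.X)

/-- The Gaussian binomial coefficient `qbinom(a,j) = ∏_{i=1}^{j} [a−i+1] / ∏_{i=1}^{j} [i]`
for integer indices (zero when the lower index is negative), in `ℚ(q)`. -/
noncomputable def qbZ (a j : ℤ) : RatFunc ℚ :=
  if j < 0 then 0
  else (∏ i ∈ Finset.range j.toNat, qi (a - i)) / ∏ i ∈ Finset.range j.toNat, qi (i + 1)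

/-- The ordinary binomial coefficient `C(a,s)` for integer indices
(zero when the lower index is negative). -/
noncomputable def ichoose (a s : ℤ) : ℤ := if s < 0 then 0 else Ring.choose a s.toNat

/-!
Let `ζ` be a primitive `d`-th root of unity. The Gaussian binomials `qbinom(A, J)` are integer
Laurent polynomials (for negative `A` too), and an integer Laurent polynomial is divisible by
`Φ_d` exactly when it vanishes at `ζ`; so it suffices to compare values at `ζ`.

The values `f A J = qbinom(A, J)(ζ)` obey the `q`-Pascal rule
`f (A + 1) (J + 1) = f A J + ζ ^ (J + 1) * f A (J + 1)`, which determines `f` from `f 0 ·`,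
upwards and downwards in `A`. The Lucas expression `C(A / d, J / d) * f (A % d) (J % d)` obeys
the same rule: a carry in `J` is absorbed by Pascal's rule for `C`, a carry in `A` by the
vanishing of `qbinom(d, k)(ζ)` for `0 < k < d`.
-/

open Polynomial LaurentPolynomial Finset

theorem mem_of_pascal_recurrence {F : Type*} [Field F] (M : AddSubgroup F) {c : ℕ → F}
    (hc : ∀ J, c J ≠ 0) (hcM : ∀ J x, x ∈ M → c J * x ∈ M)
    (hcM' : ∀ J x, x ∈ M → (c J)⁻¹ * x ∈ M) {h : ℤ → ℕ → F}
    (hpascal : ∀ A J, h (A + 1) (J + 1) = h A J + c J * h A (J + 1))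
    (hA : ∀ A, h A 0 ∈ M) (hJ : ∀ J, h 0 J ∈ M) (A : ℤ) (J : ℕ) : h A J ∈ M := by
  have key : ∀ A, (∀ J, h A J ∈ M) ↔ ∀ J, h (A + 1) J ∈ M := by
    refine fun A ↦ ⟨fun hA' J ↦ ?_, fun hA1 J ↦ ?_⟩
    · induction J with
      | zero => exact hA _
      | succ J _ => rw [hpascal]; exact M.add_mem (hA' J) (hcM J _ (hA' _))
    · induction J with
      | zero => exact hA A
      | succ J ih =>
        have : h A (J + 1) = (c J)⁻¹ * (h (A + 1) (J + 1) - h A J) := by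
          rw [hpascal, add_sub_cancel_left, inv_mul_cancel_left₀ (hc J)]
        rw [this]
        exact hcM' J _ (M.sub_mem (hA1 _) ih)
  revert J
  induction A using Int.induction_on with
  | zero => exact hJ
  | succ i ih => exact (key _).1 ih
  | pred i ih => exact (key _).2 (by rwa [sub_add_cancel])

lemma Int.exists_eq_mul_add_natCast {d : ℕ} (hd : 0 < d) (A : ℤ) :
    ∃ (a : ℤ) (b : ℕ), b < d ∧ A = a * d + b := by
  have hlt := Int.emod_lt_of_pos A (b := d) (by omega)
  have hnonneg := Int.emod_nonneg A (b := d) (by omega)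
  refine ⟨A / d, (A % d).toNat, by omega, ?_⟩
  rw [Int.toNat_of_nonneg hnonneg]
  linarith [Int.emod_add_ediv_mul A d]

lemma Nat.exists_eq_mul_add {d : ℕ} (hd : 0 < d) (J : ℕ) : ∃ s t : ℕ, t < d ∧ J = s * d + t :=
  ⟨J / d, J % d, Nat.mod_lt _ hd, (Nat.div_add_mod' J d).symm⟩

lemma RatFunc.one_sub_X_pow_ne_zero {n : ℕ} (hn : n ≠ 0) : (1 - X ^ n : RatFunc ℚ) ≠ 0 := by
  rw [← RatFunc.algebraMap_X, ← map_pow, ← map_one (algebraMap ℚ[X] _), ← map_sub]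
  refine (map_ne_zero_iff _ (RatFunc.algebraMap_injective ℚ)).2 fun h ↦ ?_
  simpa [hn] using congrArg (Polynomial.eval 0) h

lemma qi_natCast_ne_zero {n : ℕ} (hn : n ≠ 0) : qi n ≠ 0 := by
  rw [qi, zpow_natCast]
  exact div_ne_zero (RatFunc.one_sub_X_pow_ne_zero hn)
    (by simpa using RatFunc.one_sub_X_pow_ne_zero one_ne_zero)

lemma qi_mul_one_sub_X (m : ℤ) : qi m * (1 - RatFunc.X) = 1 - RatFunc.X ^ m :=
  div_mul_cancel₀ _ (by simpa using RatFunc.one_sub_X_pow_ne_zero one_ne_zero)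

lemma qi_add (m n : ℤ) : qi (m + n) = qi m + RatFunc.X ^ m * qi n := by
  rw [qi, qi, qi, zpow_add₀ RatFunc.X_ne_zero]
  ring

lemma qbZ_natCast (A : ℤ) (J : ℕ) :
    qbZ A J = (∏ i ∈ range J, qi (A - i)) / ∏ i ∈ range J, qi (i + 1) := by
  simp [qbZ]

lemma qbZ_zero_right (A : ℤ) : qbZ A 0 = 1 := by
  simp [qbZ]

lemma qbZ_zero_natCast_succ (J : ℕ) : qbZ 0 (J + 1 : ℕ) = 0 := by
  rw [qbZ_natCast, prod_range_succ', Nat.cast_zero, sub_zero, qi]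
  simp

lemma prod_qi_succ_ne_zero (J : ℕ) : ∏ i ∈ range J, qi ((i : ℤ) + 1) ≠ 0 :=
  prod_ne_zero_iff.2 fun i _ ↦ by exact_mod_cast qi_natCast_ne_zero i.succ_ne_zero

lemma qbZ_natCast_succ_mul (A : ℤ) (J : ℕ) :
    qbZ A (J + 1 : ℕ) * qi (J + 1) = qbZ A J * qi (A - J) := by
  have hJ : qi ((J : ℤ) + 1) ≠ 0 := by exact_mod_cast qi_natCast_ne_zero J.succ_ne_zero
  have hD := prod_qi_succ_ne_zero J
  rw [qbZ_natCast, qbZ_natCast, prod_range_succ, prod_range_succ]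
  field_simp

lemma qbZ_succ_natCast_succ_mul (A : ℤ) (J : ℕ) :
    qbZ (A + 1) (J + 1 : ℕ) * qi (J + 1) = qbZ A J * qi (A + 1) := by
  have hJ : qi ((J : ℤ) + 1) ≠ 0 := by exact_mod_cast qi_natCast_ne_zero J.succ_ne_zero
  have hD := prod_qi_succ_ne_zero J
  have hN : ∏ i ∈ range J, qi (A + 1 - (i + 1 : ℕ)) = ∏ i ∈ range J, qi (A - i) :=
    prod_congr rfl fun i _ ↦ by push_cast; ring_nf
  rw [qbZ_natCast, qbZ_natCast, prod_range_succ', prod_range_succ, hN]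
  field_simp
  simp

lemma qbZ_pascal (A : ℤ) (J : ℕ) :
    qbZ (A + 1) (J + 1 : ℕ) = qbZ A J + RatFunc.X ^ (J + 1) * qbZ A (J + 1 : ℕ) := by
  have hJ : qi ((J : ℤ) + 1) ≠ 0 := by exact_mod_cast qi_natCast_ne_zero J.succ_ne_zero
  have hsplit : qi (A + 1) = qi (J + 1) + RatFunc.X ^ (J + 1) * qi (A - J) := by
    rw [← zpow_natCast, Nat.cast_succ, ← qi_add]
    ring_nf
  refine mul_right_cancel₀ hJ ?_
  linear_combination qbZ_succ_natCast_succ_mul A J + qbZ A J * hsplit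
    - RatFunc.X ^ (J + 1) * qbZ_natCast_succ_mul A J

noncomputable def toRatFunc : ℤ[T;T⁻¹] →+* RatFunc ℚ :=
  LaurentPolynomial.eval₂ (Int.castRingHom _) (Units.mk0 RatFunc.X RatFunc.X_ne_zero)

lemma toRatFunc_T (n : ℤ) : toRatFunc (T n) = RatFunc.X ^ n := by
  simp [toRatFunc]

lemma toRatFunc_toLaurent (p : ℤ[X]) :
    toRatFunc (toLaurent p) = algebraMap ℚ[X] (RatFunc ℚ) (p.map (Int.castRingHom ℚ)) := by
  induction p using Polynomial.induction_on' with
  | add p q hp hq => simp only [map_add, Polynomial.map_add, hp, hq]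
  | monomial n a => simp [toRatFunc, ← RatFunc.algebraMap_X]

lemma toRatFunc_injective : Function.Injective toRatFunc := by
  refine (injective_iff_map_eq_zero _).2 fun P hP ↦ ?_
  obtain ⟨n, p, hp⟩ := exists_T_pow P
  have : toLaurent p = 0 := by
    refine toLaurent_eq_zero.2 (map_injective (Int.castRingHom ℚ) Int.cast_injective ?_)
    refine RatFunc.algebraMap_injective ℚ ?_
    rw [← toRatFunc_toLaurent, hp, map_mul, hP, zero_mul, Polynomial.map_zero, map_zero]
  rwa [hp, (isUnit_T _).mul_left_eq_zero] at this

lemma exists_toRatFunc_eq_qbZ (A : ℤ) (J : ℕ) : ∃ P, toRatFunc P = qbZ A J := by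
  have hX : ∀ n : ℤ, RatFunc.X ^ n ∈ toRatFunc.range := fun n ↦ ⟨T n, toRatFunc_T n⟩
  refine mem_of_pascal_recurrence toRatFunc.range.toAddSubgroup
    (c := fun J ↦ RatFunc.X ^ (J + 1)) (h := fun A J ↦ qbZ A J)
    (fun _ ↦ pow_ne_zero _ RatFunc.X_ne_zero) (fun J x hx ↦ ?_) (fun J x hx ↦ ?_) qbZ_pascal
    (fun A ↦ ⟨1, by simp [qbZ_zero_right]⟩) (fun J ↦ ?_) A J
  · exact toRatFunc.range.mul_mem (by exact_mod_cast hX (J + 1)) hx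
  · exact toRatFunc.range.mul_mem (by rw [← zpow_natCast, ← zpow_neg]; exact hX _) hx
  · cases J with
    | zero => exact ⟨1, by simp [qbZ_zero_right]⟩
    | succ J => exact ⟨0, (map_zero _).trans (qbZ_zero_natCast_succ J).symm⟩

noncomputable def laurentQBinom (A : ℤ) (J : ℕ) : ℤ[T;T⁻¹] :=
  (exists_toRatFunc_eq_qbZ A J).choose

@[simp]
lemma toRatFunc_laurentQBinom (A : ℤ) (J : ℕ) : toRatFunc (laurentQBinom A J) = qbZ A J :=
  (exists_toRatFunc_eq_qbZ A J).choose_spec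

structure IsQBinomialEval {K : Type*} [Field K] (ζ : K) (f : ℤ → ℕ → K) : Prop where
  zero_right : ∀ A, f A 0 = 1
  zero_left_succ : ∀ J, f 0 (J + 1) = 0
  succ_mul : ∀ A J, f A (J + 1) * (1 - ζ ^ (J + 1)) = f A J * (1 - ζ ^ (A - J))
  pascal : ∀ A J, f (A + 1) (J + 1) = f A J + ζ ^ (J + 1) * f A (J + 1)

section Lucas

variable {K : Type*} [Field K] {ζ : K} {f : ℤ → ℕ → K} {d : ℕ}

lemma isQBinomialEval_laurentQBinom (u : Kˣ) :
    IsQBinomialEval (u : K) fun A J ↦ LaurentPolynomial.eval₂ (Int.castRingHom K) u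
      (laurentQBinom A J) where
  zero_right A := by
    rw [show laurentQBinom A 0 = 1 from toRatFunc_injective (by simp [qbZ_zero_right]), map_one]
  zero_left_succ J := by
    rw [show laurentQBinom 0 (J + 1) = 0 from toRatFunc_injective (by
      simp only [toRatFunc_laurentQBinom, qbZ_zero_natCast_succ, map_zero]), map_zero]
  succ_mul A J := by
    have h : laurentQBinom A (J + 1) * (1 - T (J + 1 : ℕ))
        = laurentQBinom A J * (1 - T (A - J)) := toRatFunc_injective <| by
      simp only [map_mul, map_sub, map_one, toRatFunc_T, toRatFunc_laurentQBinom,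
        ← qi_mul_one_sub_X]
      have := qbZ_natCast_succ_mul A J
      push_cast at this ⊢
      linear_combination (1 - RatFunc.X) * this
    have := congrArg (LaurentPolynomial.eval₂ (Int.castRingHom K) u) h
    simp only [map_mul, map_sub, map_one, eval₂_T, Units.val_zpow_eq_zpow_val, zpow_natCast,
      Units.val_pow_eq_pow_val] at this
    linear_combination this
  pascal A J := by
    have h : laurentQBinom (A + 1) (J + 1)
        = laurentQBinom A J + T (J + 1 : ℕ) * laurentQBinom A (J + 1) := toRatFunc_injective <| by
      simp only [map_add, map_mul, toRatFunc_T, toRatFunc_laurentQBinom, qbZ_pascal]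
      norm_cast
    have := congrArg (LaurentPolynomial.eval₂ (Int.castRingHom K) u) h
    simp only [map_mul, map_add, eval₂_T, zpow_natCast, Units.val_pow_eq_pow_val] at this
    linear_combination this

namespace IsQBinomialEval

lemma eq_zero_of_lt (hf : IsQBinomialEval ζ f) {n k : ℕ} (h : n < k) : f n k = 0 := by
  induction n generalizing k with
  | zero =>
    obtain ⟨J, rfl⟩ := Nat.exists_eq_add_one_of_ne_zero h.ne'
    exact hf.zero_left_succ J
  | succ n ih =>
    obtain ⟨J, rfl⟩ := Nat.exists_eq_add_one_of_ne_zero (by omega : k ≠ 0)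
    rw [Nat.cast_succ, hf.pascal, ih (by omega), ih (by omega), mul_zero, add_zero]

lemma self (hf : IsQBinomialEval ζ f) (n : ℕ) : f n n = 1 := by
  induction n with
  | zero => exact hf.zero_right 0
  | succ n ih =>
    rw [Nat.cast_succ, hf.pascal, ih, hf.eq_zero_of_lt n.lt_succ_self, mul_zero, add_zero]

lemma order_eq_zero (hf : IsQBinomialEval ζ f) (hζ : IsPrimitiveRoot ζ d) {k : ℕ}
    (hk : k ≠ 0) (hkd : k < d) : f d k = 0 := by
  induction k with
  | zero => exact absurd rfl hk
  | succ j ih =>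
    have hne : 1 - ζ ^ (j + 1) ≠ 0 := sub_ne_zero.2 (hζ.pow_ne_one_of_pos_of_lt hk hkd).symm
    refine (mul_eq_zero.1 ((hf.succ_mul d j).trans ?_)).resolve_right hne
    rcases eq_or_ne j 0 with rfl | hj
    · simp [hζ.pow_eq_one]
    · rw [ih hj (by omega), zero_mul]

end IsQBinomialEval

noncomputable def lucasExtension (d : ℕ) (f : ℤ → ℕ → K) (A : ℤ) (J : ℕ) : K :=
  Ring.choose (A / d) (J / d) * f (A % d) (J % d)

lemma lucasExtension_apply (hd : 0 < d) (a : ℤ) {b : ℕ} (hb : b < d) (s : ℕ) {t : ℕ}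
    (ht : t < d) : lucasExtension d f (a * d + b) (s * d + t) = Ring.choose a s * f b t := by
  obtain ⟨hA, hB⟩ := (Int.ediv_emod_unique (b := d) (by omega)).2
    ⟨show (b : ℤ) + d * a = a * d + b by ring, by positivity, by exact_mod_cast hb⟩
  obtain ⟨hS, hT⟩ := (Nat.div_mod_unique hd).2 ⟨show t + d * s = s * d + t by ring, ht⟩
  rw [lucasExtension, hA, hB, hS, hT]

lemma IsQBinomialEval.lucasExtension_pascal (hf : IsQBinomialEval ζ f)
    (hζ : IsPrimitiveRoot ζ d) (hd : 0 < d) (A : ℤ) (J : ℕ) :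
    lucasExtension d f (A + 1) (J + 1)
      = lucasExtension d f A J + ζ ^ (J + 1) * lucasExtension d f A (J + 1) := by
  obtain ⟨a, b, hb, rfl⟩ := Int.exists_eq_mul_add_natCast hd A
  obtain ⟨s, t, ht, rfl⟩ := Nat.exists_eq_mul_add hd J
  have hper : ζ ^ (s * d + t + 1) = ζ ^ (t + 1) := by
    rw [add_assoc, pow_add, pow_mul', hζ.pow_eq_one, one_pow, one_mul]
  rw [hper]
  rcases (by omega : b + 1 < d ∨ b + 1 = d) with hb' | hb'
  · have hA : (a * d + b : ℤ) + 1 = a * d + (b + 1 : ℕ) := by push_cast; ring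
    rcases (by omega : t + 1 < d ∨ t + 1 = d) with ht' | ht'
    · rw [hA, add_assoc, lucasExtension_apply hd a hb s ht, lucasExtension_apply hd a hb s ht',
        lucasExtension_apply hd a hb' s ht', Nat.cast_succ, hf.pascal]
      ring
    · rw [hA, show s * d + t + 1 = (s + 1) * d + 0 by rw [add_mul]; omega,
        lucasExtension_apply hd a hb' _ hd, lucasExtension_apply hd a hb s ht,
        lucasExtension_apply hd a hb _ hd, hf.eq_zero_of_lt (by omega : b < t), hf.zero_right,
        hf.zero_right, ht', hζ.pow_eq_one]
      ring
  · have hA : (a * d + b : ℤ) + 1 = (a + 1) * d + (0 : ℕ) := by rw [← hb']; push_cast; ring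
    rcases (by omega : t + 1 < d ∨ t + 1 = d) with ht' | ht'
    · have hcarry : f b t + ζ ^ (t + 1) * f b (t + 1 : ℕ) = 0 := by
        rw [← hf.pascal, show (b : ℤ) + 1 = d by exact_mod_cast hb',
          hf.order_eq_zero hζ t.succ_ne_zero ht']
      rw [hA, add_assoc, lucasExtension_apply hd _ hd s ht', lucasExtension_apply hd a hb s ht,
        lucasExtension_apply hd a hb s ht', Nat.cast_zero, hf.zero_left_succ]
      linear_combination (-((Ring.choose a s : ℤ) : K)) * hcarry
    · obtain rfl : b = t := by omega
      rw [hA, show s * d + b + 1 = (s + 1) * d + 0 by rw [add_mul]; omega,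
        lucasExtension_apply hd _ hd _ hd, lucasExtension_apply hd a hb s hb,
        lucasExtension_apply hd a hb _ hd, Nat.cast_zero, hf.zero_right, hf.zero_right, hf.self,
        hb', hζ.pow_eq_one, Ring.choose_succ_succ]
      push_cast
      ring

lemma IsQBinomialEval.lucas (hf : IsQBinomialEval ζ f) (hζ : IsPrimitiveRoot ζ d)
    (hd : 0 < d) (a : ℤ) {b : ℕ} (hb : b < d) (s : ℕ) {t : ℕ} (ht : t < d) :
    f (a * d + b) (s * d + t) = Ring.choose a s * f b t := by
  rw [← lucasExtension_apply hd a hb s ht (f := f), ← sub_eq_zero]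
  refine mem_of_pascal_recurrence ⊥ (c := fun J ↦ ζ ^ (J + 1))
    (h := fun A J ↦ f A J - lucasExtension d f A J) (fun _ ↦ pow_ne_zero _ (hζ.ne_zero hd.ne'))
    (fun _ _ hx ↦ by simp_all) (fun _ _ hx ↦ by simp_all) (fun A J ↦ ?_) (fun A ↦ ?_)
    (fun J ↦ ?_) _ _
  · simp only [hf.pascal, hf.lucasExtension_pascal hζ hd]
    ring
  · simp [lucasExtension, hf.zero_right]
  · rw [AddSubgroup.mem_bot, sub_eq_zero]
    obtain ⟨s, t, ht, rfl⟩ := Nat.exists_eq_mul_add hd J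
    rw [show lucasExtension d f 0 (s * d + t) = ((Ring.choose 0 s : ℤ) : K) * f 0 t by
      simpa using lucasExtension_apply hd (0 : ℤ) hd s ht (f := f)]
    rcases Nat.eq_zero_or_pos s with rfl | hs
    · simp
    · obtain ⟨J, hJ⟩ := Nat.exists_eq_add_one_of_ne_zero (by positivity : s * d + t ≠ 0)
      rw [Ring.choose_zero_pos ℤ hs, hJ, hf.zero_left_succ, Int.cast_zero, zero_mul]

end Lucas

lemma exists_cyclotomic_mul_of_eval₂_eq_zero {K : Type*} [Field K] [CharZero K] {d : ℕ}
    (hd : 0 < d) {u : Kˣ} (hu : IsPrimitiveRoot (u : K) d) {P : ℤ[T;T⁻¹]}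
    (hP : LaurentPolynomial.eval₂ (Int.castRingHom K) u P = 0) :
    ∃ (p : ℤ[X]) (e : ℕ), toRatFunc P * RatFunc.X ^ e
      = algebraMap ℚ[X] (RatFunc ℚ) (cyclotomic d ℚ * p.map (Int.castRingHom ℚ)) := by
  obtain ⟨e, q, hq⟩ := exists_T_pow P
  have hroot : aeval (u : K) q = 0 := by
    rw [aeval_def, algebraMap_int_eq, ← eval₂_toLaurent, hq, map_mul, hP, zero_mul]
  obtain ⟨p, rfl⟩ : cyclotomic d ℤ ∣ q := by
    rw [cyclotomic_eq_minpoly hu hd]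
    exact minpoly.isIntegrallyClosed_dvd (hu.isIntegral hd) hroot
  refine ⟨p, e, ?_⟩
  rw [← zpow_natCast, ← toRatFunc_T, ← map_mul, ← hq, toRatFunc_toLaurent, Polynomial.map_mul,
    map_cyclotomic_int]

/-- The `q`-Lucas theorem: for `d > 1` and integers `a, b, s, t` with `0 ≤ b, t ≤ d−1`,
`qbinom(ad+b, sd+t) ≡ C(a,s)·qbinom(b,t) (mod Φ_d(q))`, the congruence holding among
Laurent polynomials in `q` (i.e. after clearing a suitable power of `q`, the difference
is `Φ_d(q)` times a polynomial over `ℤ`). -/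
theorem q_lucas (d : ℕ) (hd : 1 < d) (a s : ℤ) (b t : ℕ) (hb : b ≤ d - 1) (ht : t ≤ d - 1) :
    ∃ (p : Polynomial ℤ) (e : ℕ),
      (qbZ (a * d + b) (s * d + t) - (ichoose a s : RatFunc ℚ) * qbZ (b : ℤ) (t : ℤ)) *
          RatFunc.X ^ e
        = algebraMap (Polynomial ℚ) (RatFunc ℚ)
            (Polynomial.cyclotomic d ℚ * p.map (Int.castRingHom ℚ)) := by
  have hd0 : 0 < d := by omega
  rcases lt_or_ge s 0 with hs | hs
  · have hJ : s * d + t < 0 := by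
      have : (t : ℤ) < d := by omega
      nlinarith
    exact ⟨0, 0, by simp [qbZ, ichoose, hs, hJ]⟩
  lift s to ℕ using hs
  have hζ := Complex.isPrimitiveRoot_exp d hd0.ne'
  set u : ℂˣ := Units.mk0 _ (hζ.ne_zero hd0.ne')
  have hu : IsPrimitiveRoot (u : ℂ) d := hζ
  obtain ⟨p, e, h⟩ := exists_cyclotomic_mul_of_eval₂_eq_zero hd0 hu
    (P := laurentQBinom (a * d + b) (s * d + t) - ichoose a s * laurentQBinom b t) (by
      rw [map_sub, map_mul, map_intCast, sub_eq_zero, ichoose, if_neg (by omega),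
        Int.toNat_natCast]
      exact (isQBinomialEval_laurentQBinom u).lucas hu hd0 a (by omega) s (by omega))
  refine ⟨p, e, ?_⟩
  rw [← h]
  simp
end
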